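/- arXiv:2303.00883 — 5 statements merged into one kernel-verified Lean document; each statement's English description precedes it below -/
import Mathlib

section
/- Let F : ℝ^d → ℝ be twice continuously differentiable, and let L0 > 0 and L1 ≥ 0 be constants such that for all x, y ∈ ℝ^d with ‖x − y‖ ≤ 1/L1 (this constraint being vacuous when L1 = 0) one has ‖∇F(x) − ∇F(y)‖ ≤ (L0 + L1‖∇F(x)‖)·‖x − y‖. Then for every x ∈ ℝ^d, the operator norm of the Hessian satisfies ‖∇²F(x)‖ ≤ L0 + L1‖∇F(x)‖. -/
/-! Every `y` close enough to `x` satisfies `L1 * ‖x - y‖ ≤ 1`, so the gradient is Lipschitz at `x`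
with constant `L0 + L1 * ‖∇F x‖`, and a pointwise Lipschitz constant bounds the norm of the
derivative. -/

open Filter Topology

theorem eventually_mul_norm_sub_le_one {E : Type*} [SeminormedAddCommGroup E] (c : ℝ) (x : E) :
    ∀ᶠ y in 𝓝 x, c * ‖x - y‖ ≤ 1 := by
  have hlim : Tendsto (fun y => c * ‖x - y‖) (𝓝 x) (𝓝 0) := by
    simpa using (((continuous_const (y := x)).sub continuous_id).norm.const_mul c).tendsto x
  exact hlim.eventually (eventually_le_nhds zero_lt_one)

theorem hessian_bound_of_L0L1_smooth_general {d : ℕ}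
    (F : EuclideanSpace ℝ (Fin d) → ℝ)
    (L0 L1 : ℝ) (hL0 : 0 < L0) (hL1 : 0 ≤ L1)
    (hsmooth : ∀ x y : EuclideanSpace ℝ (Fin d), L1 * ‖x - y‖ ≤ 1 →
      ‖gradient F x - gradient F y‖ ≤ (L0 + L1 * ‖gradient F x‖) * ‖x - y‖) :
    ∀ x : EuclideanSpace ℝ (Fin d),
      ‖fderiv ℝ (gradient F) x‖ ≤ L0 + L1 * ‖gradient F x‖ := by
  intro x
  refine norm_fderiv_le_of_lip' ℝ (by positivity) ?_
  filter_upwards [eventually_mul_norm_sub_le_one L1 x] with y hy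
  simpa only [norm_sub_rev] using hsmooth x y hy

theorem hessian_bound_of_L0L1_smooth {d : ℕ}
    (F : EuclideanSpace ℝ (Fin d) → ℝ) (hF : ContDiff ℝ 2 F)
    (L0 L1 : ℝ) (hL0 : 0 < L0) (hL1 : 0 ≤ L1)
    (hsmooth : ∀ x y : EuclideanSpace ℝ (Fin d), L1 * ‖x - y‖ ≤ 1 →
      ‖gradient F x - gradient F y‖ ≤ (L0 + L1 * ‖gradient F x‖) * ‖x - y‖) :
    ∀ x : EuclideanSpace ℝ (Fin d),
      ‖fderiv ℝ (gradient F) x‖ ≤ L0 + L1 * ‖gradient F x‖ :=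
  hessian_bound_of_L0L1_smooth_general F L0 L1 hL0 hL1 hsmooth
end

section
/- Let F : ℝ^d → ℝ be twice continuously differentiable, and let L0 > 0 and L1 ≥ 0 be constants such that ‖∇²F(x)‖ ≤ L0 + L1‖∇F(x)‖ for all x ∈ ℝ^d. Then for all x, y ∈ ℝ^d with ‖x − y‖ ≤ 1/(2L1) (vacuous when L1 = 0), one has ‖∇F(x) − ∇F(y)‖ ≤ (2L0 + 2L1‖∇F(x)‖)·‖x − y‖; that is, F is (2L0, 2L1)-smooth in the gradient-Lipschitz sense. -/
open Set Real

/- STATEMENT 1: If F : ℝ^d → ℝ is C², L0 > 0, L1 ≥ 0, and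
   ‖∇²F(x)‖ ≤ L0 + L1‖∇F(x)‖ for all x, then for all x, y with
   ‖x − y‖ ≤ 1/(2L1) (encoded as 2·L1·‖x − y‖ ≤ 1, vacuous when L1 = 0),
   ‖∇F(x) − ∇F(y)‖ ≤ (2L0 + 2L1‖∇F(x)‖)‖x − y‖. -/
theorem L0L1_smooth_of_hessian_bound {d : ℕ}
    (F : EuclideanSpace ℝ (Fin d) → ℝ) (hF : ContDiff ℝ 2 F)
    (L0 L1 : ℝ) (hL0 : 0 < L0) (hL1 : 0 ≤ L1)
    (hhess : ∀ x : EuclideanSpace ℝ (Fin d),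
      ‖fderiv ℝ (gradient F) x‖ ≤ L0 + L1 * ‖gradient F x‖) :
    ∀ x y : EuclideanSpace ℝ (Fin d), 2 * L1 * ‖x - y‖ ≤ 1 →
      ‖gradient F x - gradient F y‖ ≤ (2 * L0 + 2 * L1 * ‖gradient F x‖) * ‖x - y‖ := by
  intro x y hxy
  set g := gradient F with hg_def
  -- g is C¹
  have hfd : ContDiff ℝ 1 (fderiv ℝ F) := hF.fderiv_right (by norm_num)
  have hg : ContDiff ℝ 1 g := by
    have : g = fun z => (InnerProductSpace.toDual ℝ (EuclideanSpace ℝ (Fin d))).symm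
        (fderiv ℝ F z) := rfl
    rw [this]
    exact (InnerProductSpace.toDual ℝ (EuclideanSpace ℝ (Fin d))).symm.contDiff.comp hfd
  have hgdiff : Differentiable ℝ g := hg.differentiable one_ne_zero
  set r := ‖x - y‖ with hr_def
  have hr0 : 0 ≤ r := norm_nonneg _
  set A := L0 + L1 * ‖g x‖ with hA_def
  have hA : 0 < A := by positivity
  -- the path and the function f
  set γ : ℝ → EuclideanSpace ℝ (Fin d) := fun t => x + t • (y - x) with hγ_def
  set f : ℝ → EuclideanSpace ℝ (Fin d) := fun t => g (γ t) - g x with hf_def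
  have hγd : ∀ t : ℝ, HasDerivAt γ (y - x) t := by
    intro t
    simpa [hγ_def] using ((hasDerivAt_id t).smul_const (y - x)).const_add x
  have hfd' : ∀ t : ℝ, HasDerivAt f ((fderiv ℝ g (γ t)) (y - x)) t := by
    intro t
    exact (((hgdiff (γ t)).hasFDerivAt.comp_hasDerivAt t (hγd t)).sub_const (g x))
  have hcont : ContinuousOn f (Icc (0:ℝ) 1) :=
    (Continuous.continuousOn (by fun_prop))
  have hbound : ∀ t ∈ Ico (0:ℝ) 1,
      ‖(fderiv ℝ g (γ t)) (y - x)‖ ≤ (L1 * r) * ‖f t‖ + A * r := by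
    intro t _
    calc ‖(fderiv ℝ g (γ t)) (y - x)‖ ≤ ‖fderiv ℝ g (γ t)‖ * ‖y - x‖ :=
          (fderiv ℝ g (γ t)).le_opNorm _
      _ ≤ (L0 + L1 * ‖g (γ t)‖) * r := by
          rw [show ‖y - x‖ = r by rw [hr_def, norm_sub_rev]]
          exact mul_le_mul_of_nonneg_right (hhess (γ t)) hr0
      _ ≤ (L0 + L1 * (‖g x‖ + ‖f t‖)) * r := by
          have : ‖g (γ t)‖ ≤ ‖g x‖ + ‖f t‖ := by
            have := norm_add_le (g x) (f t)
            simpa [hf_def] using this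
          exact mul_le_mul_of_nonneg_right (by nlinarith) hr0
      _ = (L1 * r) * ‖f t‖ + A * r := by ring
  have hf0 : ‖f 0‖ ≤ 0 := by simp [hf_def, hγ_def]
  have key := norm_le_gronwallBound_of_norm_deriv_right_le hcont
    (fun t _ => (hfd' t).hasDerivWithinAt) hf0 hbound 1 (by norm_num)
  have hf1 : f 1 = g y - g x := by simp [hf_def, hγ_def]
  have hgoal : ‖g x - g y‖ ≤ gronwallBound 0 (L1 * r) (A * r) 1 := by
    rw [norm_sub_rev, ← hf1]
    simpa using key
  refine hgoal.trans ?_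
  rcases eq_or_lt_of_le (by positivity : (0:ℝ) ≤ L1 * r) with hK | hK
  · rw [← hK, gronwallBound_K0]
    have : A * r ≤ (2 * L0 + 2 * L1 * ‖g x‖) * r := by nlinarith
    simpa using this
  · rw [gronwallBound_of_K_ne_0 (ne_of_gt hK)]
    set K := L1 * r
    have hK2 : K ≤ 1/2 := by simp only [K]; linarith
    have hexp2 : Real.exp K ≤ 2 := by
      calc Real.exp K ≤ Real.exp (Real.log 2) := by
            apply Real.exp_le_exp.mpr
            have := Real.log_two_gt_d9
            linarith
        _ = 2 := Real.exp_log (by norm_num)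
    have hexpK : Real.exp K - 1 ≤ K * Real.exp K := by
      have h := Real.add_one_le_exp (-K)
      have hpos := Real.exp_pos K
      have : (-K + 1) * Real.exp K ≤ Real.exp (-K) * Real.exp K :=
        mul_le_mul_of_nonneg_right h (le_of_lt hpos)
      rw [← Real.exp_add, neg_add_cancel, Real.exp_zero] at this
      nlinarith
    have h1 : A * r / K * (Real.exp (K * 1) - 1) ≤ A * r / K * (2 * K) := by
      apply mul_le_mul_of_nonneg_left _ (by positivity)
      rw [mul_one]
      nlinarith [Real.exp_pos K]
    have h2 : A * r / K * (2 * K) = 2 * A * r := by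
      field_simp
    calc 0 * Real.exp (K * 1) + A * r / K * (Real.exp (K * 1) - 1)
        ≤ 2 * A * r := by rw [zero_mul, zero_add]; rw [h2] at h1; exact h1
      _ = (2 * L0 + 2 * L1 * ‖g x‖) * r := by rw [hA_def]; ring
end

section
/- Generalized descent inequality from (L0,L1)-smoothness: let F : ℝ^d → ℝ be differentiable with constants L0 > 0, L1 ≥ 0 such that ‖∇F(u) − ∇F(w)‖ ≤ (L0 + L1‖∇F(u)‖)·‖u − w‖ whenever ‖u − w‖ ≤ 1/L1 (vacuous when L1 = 0). Then for all x, y ∈ ℝ^d with ‖y − x‖ ≤ 1/L1, F(y) ≤ F(x) + ⟨∇F(x), y − x⟩ + (1/2)·(L0 + L1‖∇F(x)‖)·‖y − x‖². -/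
open scoped RealInnerProductSpace

/- STATEMENT 2: generalized descent inequality for an (L0,L1)-smooth function:
   if F is differentiable and ‖∇F(u) − ∇F(w)‖ ≤ (L0 + L1‖∇F(u)‖)‖u − w‖
   whenever ‖u − w‖ ≤ 1/L1 (encoded as L1·‖u − w‖ ≤ 1, vacuous when L1 = 0),
   then for ‖y − x‖ ≤ 1/L1,
   F(y) ≤ F(x) + ⟨∇F(x), y − x⟩ + (1/2)(L0 + L1‖∇F(x)‖)‖y − x‖². -/
theorem descent_inequality_of_L0L1_smooth {d : ℕ}
    (F : EuclideanSpace ℝ (Fin d) → ℝ) (hF : Differentiable ℝ F)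
    (L0 L1 : ℝ) (hL0 : 0 < L0) (hL1 : 0 ≤ L1)
    (hsmooth : ∀ u w : EuclideanSpace ℝ (Fin d), L1 * ‖u - w‖ ≤ 1 →
      ‖gradient F u - gradient F w‖ ≤ (L0 + L1 * ‖gradient F u‖) * ‖u - w‖) :
    ∀ x y : EuclideanSpace ℝ (Fin d), L1 * ‖y - x‖ ≤ 1 →
      F y ≤ F x + ⟪gradient F x, y - x⟫
        + (1 / 2) * (L0 + L1 * ‖gradient F x‖) * ‖y - x‖ ^ 2 := by
  intro x y hxy
  set v : EuclideanSpace ℝ (Fin d) := y - x with hv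
  set C : ℝ := L0 + L1 * ‖gradient F x‖ with hC
  have hCpos : 0 < C := by positivity
  set a : ℝ := ⟪gradient F x, v⟫ with ha
  -- the path and the auxiliary function
  set g : ℝ → ℝ := fun t => F (x + t • v) with hg
  set φ : ℝ → ℝ := fun t => F x + t * a + C / 2 * t ^ 2 * ‖v‖ ^ 2 - g t with hφ
  -- derivative of g
  have hgderiv : ∀ t : ℝ, HasDerivAt g ⟪gradient F (x + t • v), v⟫ t := by
    intro t
    have hpath : HasDerivAt (fun t : ℝ => x + t • v) v t := by
      simpa using ((hasDerivAt_id t).smul_const v).const_add x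
    have hFd : HasFDerivAt F (InnerProductSpace.toDual ℝ _ (gradient F (x + t • v)))
        (x + t • v) := ((hF (x + t • v)).hasGradientAt).hasFDerivAt
    have := hFd.comp_hasDerivAt t hpath
    simp [InnerProductSpace.toDual_apply_apply] at this ⊢
    exact this
  have hφderiv : ∀ t : ℝ, HasDerivAt φ
      (a + C * t * ‖v‖ ^ 2 - ⟪gradient F (x + t • v), v⟫) t := by
    intro t
    have h1 : HasDerivAt (fun t : ℝ => F x + t * a + C / 2 * t ^ 2 * ‖v‖ ^ 2)
        (a + C * t * ‖v‖ ^ 2) t := by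
      have h2 : HasDerivAt (fun t : ℝ => t * a) a t := by
        simpa using (hasDerivAt_id t).mul_const a
      have h3 : HasDerivAt (fun t : ℝ => C / 2 * t ^ 2 * ‖v‖ ^ 2)
          (C * t * ‖v‖ ^ 2) t := by
        have := ((hasDerivAt_pow 2 t).const_mul (C / 2)).mul_const (‖v‖ ^ 2)
        exact this.congr_deriv (by ring)
      exact (h2.const_add (F x)).add h3
    exact h1.sub (hgderiv t)
  -- the derivative of φ is nonnegative on [0,1]
  have hkey : ∀ t ∈ Set.Icc (0:ℝ) 1, 0 ≤ a + C * t * ‖v‖ ^ 2 - ⟪gradient F (x + t • v), v⟫ := by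
    intro t ht
    obtain ⟨ht0, ht1⟩ := ht
    have hnorm : ‖x - (x + t • v)‖ = t * ‖v‖ := by
      simp [norm_smul, abs_of_nonneg ht0]
    have hle1 : L1 * ‖x - (x + t • v)‖ ≤ 1 := by
      rw [hnorm]
      calc L1 * (t * ‖v‖) ≤ L1 * (1 * ‖v‖) := by
            apply mul_le_mul_of_nonneg_left (by apply mul_le_mul_of_nonneg_right ht1 (norm_nonneg v)) hL1
        _ = L1 * ‖v‖ := by ring
        _ ≤ 1 := hxy
    have hs := hsmooth x (x + t • v) hle1
    rw [hnorm] at hs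
    have hinner : ⟪gradient F (x + t • v), v⟫ - a ≤ C * t * ‖v‖ ^ 2 := by
      have h1 : ⟪gradient F (x + t • v), v⟫ - a = ⟪gradient F (x + t • v) - gradient F x, v⟫ := by
        rw [ha, inner_sub_left]
      rw [h1]
      calc ⟪gradient F (x + t • v) - gradient F x, v⟫
          ≤ ‖gradient F (x + t • v) - gradient F x‖ * ‖v‖ := real_inner_le_norm _ _
        _ = ‖gradient F x - gradient F (x + t • v)‖ * ‖v‖ := by rw [norm_sub_rev]
        _ ≤ C * (t * ‖v‖) * ‖v‖ := by
            apply mul_le_mul_of_nonneg_right hs (norm_nonneg v)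
        _ = C * t * ‖v‖ ^ 2 := by ring
    linarith
  -- monotonicity of φ on [0,1]
  have hmono : MonotoneOn φ (Set.Icc (0:ℝ) 1) := by
    apply monotoneOn_of_deriv_nonneg (convex_Icc 0 1)
    · exact fun t _ => (hφderiv t).continuousAt.continuousWithinAt
    · exact fun t _ => ((hφderiv t).differentiableAt).differentiableWithinAt
    · intro t ht
      rw [interior_Icc] at ht
      rw [(hφderiv t).deriv]
      exact hkey t ⟨le_of_lt ht.1, le_of_lt ht.2⟩
  have h01 : φ 0 ≤ φ 1 :=
    hmono (Set.mem_Icc.2 ⟨le_refl 0, zero_le_one⟩) (Set.mem_Icc.2 ⟨zero_le_one, le_refl 1⟩) zero_le_one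
  have hφ0 : φ 0 = 0 := by simp [hφ, hg]
  have hg1 : g 1 = F y := by simp [hg, hv]
  have hφ1 : φ 1 = F x + a + C / 2 * ‖v‖ ^ 2 - F y := by
    simp [hφ, hg1]
  rw [hφ0, hφ1] at h01
  have : F y ≤ F x + a + C / 2 * ‖v‖ ^ 2 := by linarith
  calc F y ≤ F x + a + C / 2 * ‖v‖ ^ 2 := this
    _ = F x + ⟪gradient F x, y - x⟫ + 1 / 2 * (L0 + L1 * ‖gradient F x‖) * ‖y - x‖ ^ 2 := by
        rw [ha, hC, hv]; ring
end

section
/- Descent Lemma for clipped steps: let F : ℝ^d → ℝ be (L0,L1)-smooth (L0 > 0, L1 ≥ 0), let ε > 0 satisfy 2·L1·ε ≤ L0, and let x, v ∈ ℝ^d and a stepsize η > 0 satisfy η ≤ min{1/(2L0), ε/(L0‖v‖)} (the second term read as +∞ when v = 0). Setting x⁺ = x − η·v, one has F(x⁺) ≤ F(x) − (1/8)·η·‖v‖² + (5/8)·η·‖v − ∇F(x)‖². -/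
open InnerProductSpace

lemma taylor_upper_aux {d : ℕ} (F : EuclideanSpace ℝ (Fin d) → ℝ)
    (hF : Differentiable ℝ F) (x w : EuclideanSpace ℝ (Fin d)) (C : ℝ)
    (hC : ∀ t ∈ Set.Icc (0:ℝ) 1,
      ‖gradient F (x + t • w) - gradient F x‖ ≤ C * t * ‖w‖) :
    F (x + w) ≤ F x + inner ℝ (gradient F x) w + C / 2 * ‖w‖ ^ 2 := by
  set g := gradient F x with hg
  have hc : ∀ t : ℝ, HasDerivAt (fun s : ℝ => x + s • w) w t := by
    intro t
    simpa using ((hasDerivAt_id t).smul_const w).const_add x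
  have hφ : ∀ t : ℝ, HasDerivAt (fun s : ℝ => F (x + s • w))
      (inner ℝ (gradient F (x + t • w)) w : ℝ) t := by
    intro t
    have hf := (hF (x + t • w)).hasGradientAt.hasFDerivAt
    have := hf.comp_hasDerivAt t (hc t)
    simpa [Function.comp_def] using this
  set ψ : ℝ → ℝ := fun t => F (x + t • w) - t * inner ℝ g w - C / 2 * t ^ 2 * ‖w‖ ^ 2
    with hψdef
  have hψ : ∀ t : ℝ, HasDerivAt ψ
      ((inner ℝ (gradient F (x + t • w)) w : ℝ) - inner ℝ g w - C * t * ‖w‖ ^ 2) t := by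
    intro t
    have h1 : HasDerivAt (fun s : ℝ => s * (inner ℝ g w : ℝ)) (inner ℝ g w : ℝ) t := by
      simpa using (hasDerivAt_id t).mul_const (inner ℝ g w : ℝ)
    have h2 : HasDerivAt (fun s : ℝ => C / 2 * s ^ 2 * ‖w‖ ^ 2)
        (C * t * ‖w‖ ^ 2) t := by
      have := ((hasDerivAt_pow 2 t).const_mul (C / 2)).mul_const (‖w‖ ^ 2)
      rw [show C * t * ‖w‖ ^ 2 = C / 2 * (↑(2:ℕ) * t ^ (2 - 1)) * ‖w‖ ^ 2 by
        rw [show (2:ℕ) - 1 = 1 from rfl, pow_one]; push_cast; ring]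
      exact this
    exact ((hφ t).sub h1).sub h2
  have hanti : AntitoneOn ψ (Set.Icc 0 1) := by
    apply antitoneOn_of_deriv_nonpos (convex_Icc 0 1)
    · exact fun t _ => ((hψ t).differentiableAt.continuousAt).continuousWithinAt
    · exact fun t _ => (hψ t).differentiableAt.differentiableWithinAt
    · intro t ht
      rw [interior_Icc] at ht
      rw [(hψ t).deriv]
      have hcs : (inner ℝ (gradient F (x + t • w)) w : ℝ) - inner ℝ g w
          ≤ ‖gradient F (x + t • w) - g‖ * ‖w‖ := by
        have := real_inner_le_norm (gradient F (x + t • w) - g) w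
        simpa [inner_sub_left] using this
      have hb := hC t ⟨le_of_lt ht.1, le_of_lt ht.2⟩
      have : ‖gradient F (x + t • w) - g‖ * ‖w‖ ≤ C * t * ‖w‖ * ‖w‖ :=
        mul_le_mul_of_nonneg_right hb (norm_nonneg w)
      nlinarith [sq_nonneg ‖w‖]
  have h01 := hanti (Set.left_mem_Icc.2 zero_le_one) (Set.right_mem_Icc.2 zero_le_one)
    zero_le_one
  simp only [hψdef, zero_smul, add_zero, one_smul, zero_mul, mul_zero, zero_pow,
    sub_zero, one_pow, mul_one] at h01
  linarith

theorem descent_lemma_clipped {d : ℕ}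
    (F : EuclideanSpace ℝ (Fin d) → ℝ) (hF : Differentiable ℝ F)
    (L0 L1 ε : ℝ) (hL0 : 0 < L0) (hL1 : 0 ≤ L1) (hε : 0 < ε)
    (hεL : 2 * L1 * ε ≤ L0)
    (hsmooth : ∀ u w : EuclideanSpace ℝ (Fin d), L1 * ‖u - w‖ ≤ 1 →
      ‖gradient F u - gradient F w‖ ≤ (L0 + L1 * ‖gradient F u‖) * ‖u - w‖)
    (x v : EuclideanSpace ℝ (Fin d)) (η : ℝ) (hη : 0 < η)
    (hη1 : η ≤ 1 / (2 * L0)) (hη2 : L0 * η * ‖v‖ ≤ ε) :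
    F (x - η • v) ≤ F x - (1 / 8) * η * ‖v‖ ^ 2
      + (5 / 8) * η * ‖v - gradient F x‖ ^ 2 := by
  set g := gradient F x with hg
  have hL0η : L0 * η ≤ 1 / 2 := by
    rw [le_div_iff₀ (by positivity)] at hη1
    linarith
  have hL1ηv : L1 * (η * ‖v‖) ≤ 1 / 2 := by
    have h1 : L1 * (L0 * η * ‖v‖) ≤ L1 * ε :=
      mul_le_mul_of_nonneg_left hη2 hL1
    have h2 : L1 * ε ≤ L0 / 2 := by linarith
    have h3 : L1 * (L0 * η * ‖v‖) ≤ L0 / 2 := le_trans h1 h2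
    have h4 : L0 * (L1 * (η * ‖v‖)) ≤ L0 * (1 / 2) := by nlinarith
    exact le_of_mul_le_mul_left h4 hL0
  set w : EuclideanSpace ℝ (Fin d) := -(η • v) with hw
  have hxw : x - η • v = x + w := by rw [hw, sub_eq_add_neg]
  have hnw : ‖w‖ = η * ‖v‖ := by
    rw [hw, norm_neg, norm_smul, Real.norm_eq_abs, abs_of_pos hη]
  have hC : ∀ t ∈ Set.Icc (0:ℝ) 1,
      ‖gradient F (x + t • w) - gradient F x‖ ≤ (L0 + L1 * ‖g‖) * t * ‖w‖ := by
    intro t ht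
    have hdiff : x - (x + t • w) = (t * η) • v := by
      rw [hw]
      module
    have hnd : ‖x - (x + t • w)‖ = t * (η * ‖v‖) := by
      rw [hdiff, norm_smul, Real.norm_eq_abs, abs_of_nonneg (mul_nonneg ht.1 hη.le)]
      ring
    have hcond : L1 * ‖x - (x + t • w)‖ ≤ 1 := by
      rw [hnd]
      have : L1 * (t * (η * ‖v‖)) ≤ L1 * (η * ‖v‖) := by
        apply mul_le_mul_of_nonneg_left _ hL1
        have : t * (η * ‖v‖) ≤ 1 * (η * ‖v‖) :=
          mul_le_mul_of_nonneg_right ht.2 (by positivity)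
        linarith
      linarith
    have := hsmooth x (x + t • w) hcond
    rw [norm_sub_rev] at this
    calc ‖gradient F (x + t • w) - g‖ ≤ (L0 + L1 * ‖g‖) * ‖x - (x + t • w)‖ := this
      _ = (L0 + L1 * ‖g‖) * t * ‖w‖ := by rw [hnd, hnw]; ring
  have hT := taylor_upper_aux F hF x w ((L0 + L1 * ‖g‖)) hC
  rw [← hxw, ← hg] at hT
  have hinner : (inner ℝ g w : ℝ) = -(η * inner ℝ g v) := by
    rw [hw, inner_neg_right, inner_smul_right]
  rw [hinner, hnw] at hT
  -- now algebra
  have hcs : (inner ℝ g v : ℝ) ≤ ‖g‖ * ‖v‖ := real_inner_le_norm g v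
  have hid : ‖v - g‖ ^ 2 = ‖v‖ ^ 2 - 2 * inner ℝ v g + ‖g‖ ^ 2 := by
    rw [@norm_sub_sq_real]
  have hsymm : (inner ℝ v g : ℝ) = inner ℝ g v := real_inner_comm g v
  rw [hid, hsymm]
  have h1 : 0 ≤ (1 / 2 - L0 * η) * (η * ‖v‖ ^ 2) :=
    mul_nonneg (by linarith) (by positivity)
  have h2 : 0 ≤ (1 / 2 - L1 * (η * ‖v‖)) * (η * ‖g‖ * ‖v‖) :=
    mul_nonneg (by linarith) (by positivity)
  have h3 : 0 ≤ η * (‖g‖ * ‖v‖ - inner ℝ g v) := mul_nonneg hη.le (by linarith)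
  have h4 : 0 ≤ η * (‖v‖ - ‖g‖) ^ 2 := mul_nonneg hη.le (sq_nonneg _)
  have h5 : 0 ≤ η * ‖g‖ ^ 2 := by positivity
  nlinarith [hT]
end

section
/- One-step variance amplification bound: let F(x) = E_ξ[f(x;ξ)] with unbiased stochastic gradients, satisfying the averaged (L0,L1)-smoothness condition with L0 > 0, L1 > 0; let ε > 0 satisfy 2·L1·ε ≤ L0. Fix x, v ∈ ℝ^d and a stepsize η > 0 with η ≤ min{ε/(L0‖v‖), ε/(L1‖v‖²)} (read as +∞ when v = 0), set x⁺ = x − η·v, and let ξ_1, …, ξ_m be m i.i.d. samples from the distribution of ξ. Then E‖(1/m)·Σ_{i=1}^m (∇f(x⁺;ξ_i) − ∇f(x;ξ_i)) + ∇F(x) − ∇F(x⁺)‖² ≤ (6/m)·ε² + (4/m)·(L1/L0)²·ε²·‖v − ∇F(x)‖². -/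
open MeasureTheory
open scoped BigOperators

section helpers
set_option linter.unusedSectionVars false
variable {Ω : Type*} [MeasureSpace Ω] [IsProbabilityMeasure (volume : Measure Ω)] {m : ℕ}

lemma my_prod_eq (i : Fin m) (φ : Ω → ℝ) (ω : Fin m → Ω) :
    (∏ l, (if l = i then φ else fun _ => (1:ℝ)) (ω l)) = φ (ω i) := by
  simp [ite_apply, Finset.prod_ite_eq']

lemma my_integrable_eval (i : Fin m) {φ : Ω → ℝ} (hφ : Integrable φ) :
    Integrable (fun ω : Fin m → Ω => φ (ω i)) := by
  have h := Integrable.fintype_prod (ι := Fin m) (E := Ω) (μ := fun _ => volume)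
    (f := fun l => if l = i then φ else fun _ => 1) (fun l => by
      by_cases hl : l = i <;> simp [hl, hφ])
  simp only [my_prod_eq] at h
  exact h

lemma my_integral_eval (i : Fin m) (φ : Ω → ℝ) :
    ∫ ω : Fin m → Ω, φ (ω i) = ∫ a, φ a := by
  have h := integral_fintype_prod_volume_eq_prod (𝕜 := ℝ) (ι := Fin m) (E := fun _ => Ω)
    (f := fun l => if l = i then φ else fun _ => 1)
  simp only [my_prod_eq] at h
  rw [h, Finset.prod_congr rfl (fun l _ => show (∫ a : Ω, (if l = i then φ else fun _ => (1:ℝ)) a) = if l = i then ∫ a, φ a else 1 from by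
    by_cases hl : l = i <;> simp [hl])]
  simp [Finset.prod_ite_eq']

lemma my_prod_eq2 (i j : Fin m) (hij : i ≠ j) (φ ψ : Ω → ℝ) (ω : Fin m → Ω) :
    (∏ l, (if l = i then φ else if l = j then ψ else fun _ => (1:ℝ)) (ω l))
      = φ (ω i) * ψ (ω j) := by
  rw [← Finset.mul_prod_erase Finset.univ _ (Finset.mem_univ i),
    ← Finset.mul_prod_erase _ _ (Finset.mem_erase.mpr ⟨hij.symm, Finset.mem_univ j⟩),
    Finset.prod_eq_one]
  · simp [hij.symm]
  · intro l hl
    have h1 := (Finset.mem_erase.mp hl).1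
    have h2 := (Finset.mem_erase.mp (Finset.mem_erase.mp hl).2).1
    simp [h1, h2]

lemma my_integrable_eval2 (i j : Fin m) (hij : i ≠ j) {φ ψ : Ω → ℝ}
    (hφ : Integrable φ) (hψ : Integrable ψ) :
    Integrable (fun ω : Fin m → Ω => φ (ω i) * ψ (ω j)) := by
  have h := Integrable.fintype_prod (ι := Fin m) (E := Ω) (μ := fun _ => volume)
    (f := fun l => if l = i then φ else if l = j then ψ else fun _ => 1) (fun l => by
      by_cases hl : l = i
      · simp [hl, hφ]
      · by_cases hl' : l = j <;> simp [hl, hl', hij.symm, hφ, hψ])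
  simp only [my_prod_eq2 i j hij] at h
  exact h

lemma my_integral_eval2 (i j : Fin m) (hij : i ≠ j) (φ ψ : Ω → ℝ) :
    ∫ ω : Fin m → Ω, φ (ω i) * ψ (ω j) = (∫ a, φ a) * (∫ a, ψ a) := by
  have h := integral_fintype_prod_volume_eq_prod (𝕜 := ℝ) (ι := Fin m) (E := fun _ => Ω)
    (f := fun l => if l = i then φ else if l = j then ψ else fun _ => 1)
  simp only [my_prod_eq2 i j hij] at h
  rw [h, Finset.prod_congr rfl (fun l _ => show (∫ a : Ω, (if l = i then φ else if l = j then ψ else fun _ => (1:ℝ)) a) = if l = i then ∫ a, φ a else if l = j then ∫ a, ψ a else 1 from by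
    by_cases hl : l = i
    · simp [hl]
    · by_cases hl' : l = j <;> simp [hl, hl', hij.symm])]
  rw [← Finset.mul_prod_erase Finset.univ _ (Finset.mem_univ i),
    ← Finset.mul_prod_erase _ _ (Finset.mem_erase.mpr ⟨hij.symm, Finset.mem_univ j⟩),
    Finset.prod_eq_one]
  · simp [hij.symm]
  · intro l hl
    have h1 := (Finset.mem_erase.mp hl).1
    have h2 := (Finset.mem_erase.mp (Finset.mem_erase.mp hl).2).1
    simp [h1, h2]


variable {d : ℕ}

lemma my_norm_sq_eq (u : EuclideanSpace ℝ (Fin d)) : ‖u‖ ^ 2 = ∑ k, (u k) ^ 2 := by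
  rw [EuclideanSpace.norm_eq, Real.sq_sqrt (by positivity)]
  simp [Real.norm_eq_abs, sq_abs]

lemma my_comp_sq_le (u : EuclideanSpace ℝ (Fin d)) (k : Fin d) : (u k) ^ 2 ≤ ‖u‖ ^ 2 := by
  rw [my_norm_sq_eq]
  exact Finset.single_le_sum (f := fun l => (u l) ^ 2) (fun _ _ => sq_nonneg _) (Finset.mem_univ k)

lemma my_sum_apply {Ω : Type*} (Y : Ω → EuclideanSpace ℝ (Fin d)) (ω : Fin m → Ω) (k : Fin d) :
    (∑ i, Y (ω i)) k = ∑ i, Y (ω i) k := by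
  have := map_sum (EuclideanSpace.proj (𝕜 := ℝ) k) (fun i => Y (ω i)) Finset.univ
  simp only [PiLp.proj_apply] at this
  exact this

lemma pi_variance (Y : Ω → EuclideanSpace ℝ (Fin d))
    (hYint : Integrable Y) (hY2 : Integrable (fun ω => ‖Y ω‖ ^ 2))
    (hY0 : ∫ ω, Y ω = 0) :
    ∫ ω : Fin m → Ω, ‖∑ i, Y (ω i)‖ ^ 2 = m * ∫ ω, ‖Y ω‖ ^ 2 := by
  set Yk : Fin d → Ω → ℝ := fun k ω => Y ω k with hYk_def
  have hYk : ∀ k, Integrable (Yk k) := fun k => by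
    have := (EuclideanSpace.proj (𝕜 := ℝ) k).integrable_comp hYint
    simpa only [PiLp.proj_apply] using this
  have hYk0 : ∀ k, ∫ a, Yk k a = 0 := fun k => by
    have := (EuclideanSpace.proj (𝕜 := ℝ) k).integral_comp_comm hYint
    rw [hY0] at this
    simpa only [PiLp.proj_apply, map_zero] using this
  have hYk2 : ∀ k, Integrable (fun a => Yk k a ^ 2) := fun k => by
    refine hY2.mono ((hYk k).1.pow 2) ?_
    filter_upwards with a
    rw [Real.norm_eq_abs, Real.norm_eq_abs, abs_of_nonneg (sq_nonneg _),
      abs_of_nonneg (sq_nonneg _)]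
    exact my_comp_sq_le _ _
  have key : ∀ (k : Fin d) (i j : Fin m),
      Integrable (fun ω : Fin m → Ω => Yk k (ω i) * Yk k (ω j)) ∧
      (∫ ω : Fin m → Ω, Yk k (ω i) * Yk k (ω j))
        = if i = j then ∫ a, Yk k a ^ 2 else 0 := by
    intro k i j
    by_cases hij : i = j
    · subst hij
      have hsq : Integrable (fun a => Yk k a * Yk k a) := by
        simpa [pow_two] using hYk2 k
      refine ⟨my_integrable_eval i hsq, ?_⟩
      rw [my_integral_eval i (fun a => Yk k a * Yk k a)]
      simp [pow_two]
    · refine ⟨my_integrable_eval2 i j hij (hYk k) (hYk k), ?_⟩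
      rw [my_integral_eval2 i j hij, hYk0 k]
      simp [hij]
  calc ∫ ω : Fin m → Ω, ‖∑ i, Y (ω i)‖ ^ 2
      = ∫ ω : Fin m → Ω, ∑ k, ∑ i, ∑ j, Yk k (ω i) * Yk k (ω j) := by
        congr 1; funext ω
        rw [my_norm_sq_eq]
        refine Finset.sum_congr rfl fun k _ => ?_
        rw [my_sum_apply, pow_two, Finset.sum_mul_sum]
    _ = ∑ k, ∑ i, ∑ j, ∫ ω : Fin m → Ω, Yk k (ω i) * Yk k (ω j) := by
        rw [integral_finset_sum _ (fun k _ => integrable_finset_sum _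
          (fun i _ => integrable_finset_sum _ (fun j _ => (key k i j).1)))]
        refine Finset.sum_congr rfl fun k _ => ?_
        rw [integral_finset_sum _ (fun i _ => integrable_finset_sum _ (fun j _ => (key k i j).1))]
        refine Finset.sum_congr rfl fun i _ => ?_
        rw [integral_finset_sum _ (fun j _ => (key k i j).1)]
    _ = ∑ k, ∑ i : Fin m, ∫ a, Yk k a ^ 2 := by
        refine Finset.sum_congr rfl fun k _ => Finset.sum_congr rfl fun i _ => ?_
        rw [Finset.sum_congr rfl (fun j _ => (key k i j).2), Finset.sum_ite_eq Finset.univ i]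
        simp
    _ = ∑ k, (m : ℝ) * ∫ a, Yk k a ^ 2 := by simp
    _ = (m : ℝ) * ∑ k, ∫ a, Yk k a ^ 2 := by rw [Finset.mul_sum]
    _ = (m : ℝ) * ∫ a, ∑ k, Yk k a ^ 2 := by
        rw [integral_finset_sum _ (fun k _ => hYk2 k)]
    _ = m * ∫ ω, ‖Y ω‖ ^ 2 := by
        congr 1
        refine integral_congr_ae (Filter.Eventually.of_forall fun a => ?_)
        simp only []; rw [my_norm_sq_eq]

lemma my_arith (e c D : ℝ) (hc : 0 ≤ c) (hD : 0 ≤ D) :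
    (2 * e + c * e * D) ^ 2 ≤ 6 * e ^ 2 + 4 * c ^ 2 * e ^ 2 * D ^ 2 := by
  nlinarith [sq_nonneg (e - c * e * D), sq_nonneg (c * e * D)]

end helpers

/- STATEMENT 11: one-step variance amplification bound for the Spider
   estimator.  F(x) = E_ξ[f(x;ξ)] with unbiased stochastic gradients
   g(x;ξ) = ∇f(x;ξ), satisfying the averaged (L0,L1)-smoothness condition
   (the constraint ‖x − y‖ ≤ 1/L1 encoded as L1·‖x − y‖ ≤ 1); ε > 0 with
   2L1ε ≤ L0; stepsize 0 < η with η ≤ ε/(L0‖v‖) and η ≤ ε/(L1‖v‖²)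
   (encoded multiplicatively, so read as +∞ when v = 0); x⁺ = x − η·v;
   ξ_1, …, ξ_m i.i.d. samples modeled by the product measure on Fin m → Ω.
   Then E‖(1/m)Σᵢ(∇f(x⁺;ξᵢ) − ∇f(x;ξᵢ)) + ∇F(x) − ∇F(x⁺)‖²
        ≤ (6/m)ε² + (4/m)(L1/L0)²ε²‖v − ∇F(x)‖². -/
theorem one_step_variance_amplification {d : ℕ}
    {Ω : Type*} [MeasurableSpace Ω] (P : Measure Ω) [IsProbabilityMeasure P]
    (f : EuclideanSpace ℝ (Fin d) → Ω → ℝ)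
    (hf : ∀ ω, Differentiable ℝ (fun x => f x ω))
    (g : EuclideanSpace ℝ (Fin d) → Ω → EuclideanSpace ℝ (Fin d))
    (hg : ∀ x ω, g x ω = gradient (fun y => f y ω) x)
    (hgmeas : Measurable (fun p : EuclideanSpace ℝ (Fin d) × Ω => g p.1 p.2))
    (F : EuclideanSpace ℝ (Fin d) → ℝ) (hFdiff : Differentiable ℝ F)
    (hF : ∀ x, F x = ∫ ω, f x ω ∂P)
    (hunbiased : ∀ x, ∫ ω, g x ω ∂P = gradient F x)
    (hgint : ∀ x, Integrable (g x) P)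
    (hint : ∀ x y : EuclideanSpace ℝ (Fin d),
      Integrable (fun ω => ‖g x ω - g y ω‖ ^ 2) P)
    (L0 L1 ε : ℝ) (hL0 : 0 < L0) (hL1 : 0 < L1) (hε : 0 < ε)
    (hεL : 2 * L1 * ε ≤ L0)
    (havg : ∀ x y : EuclideanSpace ℝ (Fin d), L1 * ‖x - y‖ ≤ 1 →
      Real.sqrt (∫ ω, ‖g x ω - g y ω‖ ^ 2 ∂P)
        ≤ (L0 + L1 * ‖gradient F x‖) * ‖x - y‖)
    (x v : EuclideanSpace ℝ (Fin d)) (η : ℝ) (hη : 0 < η)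
    (hη1 : L0 * η * ‖v‖ ≤ ε) (hη2 : L1 * η * ‖v‖ ^ 2 ≤ ε)
    (m : ℕ) (hm : 0 < m) :
    ∫ ω : Fin m → Ω,
        ‖(m : ℝ)⁻¹ • (∑ i, (g (x - η • v) (ω i) - g x (ω i)))
          + gradient F x - gradient F (x - η • v)‖ ^ 2
        ∂(Measure.pi fun _ => P)
      ≤ (6 / m) * ε ^ 2 + (4 / m) * (L1 / L0) ^ 2 * ε ^ 2 * ‖v - gradient F x‖ ^ 2 := by

  letI : MeasureSpace Ω := ⟨P⟩
  haveI : IsProbabilityMeasure (volume : Measure Ω) := ‹IsProbabilityMeasure P›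
  set xp := x - η • v with hxp
  set μ := gradient F xp - gradient F x with hμdef
  have hm' : (0:ℝ) < m := by exact_mod_cast hm
  set h := fun ω => g xp ω - g x ω with hh
  have hhint : Integrable h P := (hgint xp).sub (hgint x)
  have hμ : ∫ ω, h ω ∂P = μ := by
    rw [hμdef, ← hunbiased, ← hunbiased, ← integral_sub (hgint xp) (hgint x)]
  set Y := fun ω => h ω - μ with hY
  have hYint : Integrable Y P := hhint.sub (integrable_const μ)
  have hY0 : ∫ ω, Y ω ∂P = 0 := by
    rw [hY]
    rw [integral_sub hhint (integrable_const μ), hμ, integral_const]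
    simp
  have hh2 : Integrable (fun ω => ‖h ω‖ ^ 2) P := hint xp x
  have hY2 : Integrable (fun ω => ‖Y ω‖ ^ 2) P := by
    refine ((hh2.const_mul 2).add (integrable_const (2 * ‖μ‖ ^ 2))).mono
      (hYint.1.norm.pow 2) ?_
    filter_upwards with ω
    have h1 : ‖Y ω‖ ≤ ‖h ω‖ + ‖μ‖ := norm_sub_le _ _
    have h2 : (0:ℝ) ≤ ‖h ω‖ := norm_nonneg _
    have h3 : (0:ℝ) ≤ ‖μ‖ := norm_nonneg _
    have h4 : (0:ℝ) ≤ ‖Y ω‖ := norm_nonneg _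
    have hb : ‖Y ω‖ ^ 2 ≤ 2 * ‖h ω‖ ^ 2 + 2 * ‖μ‖ ^ 2 := by
      nlinarith [sq_nonneg (‖h ω‖ - ‖μ‖)]
    calc ‖‖Y ω‖ ^ 2‖ = ‖Y ω‖ ^ 2 := by
          rw [Real.norm_eq_abs, abs_of_nonneg (by positivity : (0:ℝ) ≤ ‖Y ω‖ ^ 2)]
      _ ≤ 2 * ‖h ω‖ ^ 2 + 2 * ‖μ‖ ^ 2 := hb
      _ ≤ ‖2 * ‖h ω‖ ^ 2 + 2 * ‖μ‖ ^ 2‖ := le_abs_self _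
  -- rewrite the integrand
  have hrw : ∀ ω : Fin m → Ω,
      ‖(m : ℝ)⁻¹ • (∑ i, (g xp (ω i) - g x (ω i))) + gradient F x - gradient F xp‖ ^ 2
        = (m:ℝ)⁻¹ ^ 2 * ‖∑ i, Y (ω i)‖ ^ 2 := by
    intro ω
    have hsum : ∑ i, Y (ω i) = (∑ i, (g xp (ω i) - g x (ω i))) - (m:ℝ) • μ := by
      rw [hY]
      rw [Finset.sum_sub_distrib, Finset.sum_const, Finset.card_univ, Fintype.card_fin]
      congr 1
      exact ((Nat.cast_smul_eq_nsmul ℝ m μ).symm)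
    have heq : (m : ℝ)⁻¹ • (∑ i, (g xp (ω i) - g x (ω i))) + gradient F x - gradient F xp
        = (m:ℝ)⁻¹ • (∑ i, Y (ω i)) := by
      rw [hsum, smul_sub, smul_smul, inv_mul_cancel₀ (ne_of_gt hm'), one_smul, hμdef]
      abel
    rw [heq, norm_smul, mul_pow, Real.norm_eq_abs, sq_abs]
  have hLHS : ∫ ω : Fin m → Ω,
        ‖(m : ℝ)⁻¹ • (∑ i, (g xp (ω i) - g x (ω i))) + gradient F x - gradient F xp‖ ^ 2
        ∂(Measure.pi fun _ => P)
      = (m:ℝ)⁻¹ ^ 2 * ((m:ℝ) * ∫ ω, ‖Y ω‖ ^ 2 ∂P) := by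
    rw [integral_congr_ae (Filter.Eventually.of_forall hrw), integral_const_mul]
    congr 1
    exact pi_variance (m := m) Y hYint hY2 hY0
  -- bound the variance by the second moment
  have hinner : Integrable (fun ω => (inner ℝ μ (h ω) : ℝ)) P := hhint.const_inner μ
  have hYh : ∫ ω, ‖Y ω‖ ^ 2 ∂P = (∫ ω, ‖h ω‖ ^ 2 ∂P) - ‖μ‖ ^ 2 := by
    have hptw : ∀ ω, ‖Y ω‖ ^ 2 = (‖h ω‖ ^ 2 - 2 * inner ℝ μ (h ω)) + ‖μ‖ ^ 2 := by
      intro ω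
      rw [hY]
      rw [norm_sub_sq_real, real_inner_comm]
    have hint1 : Integrable (fun ω => ‖h ω‖ ^ 2 - 2 * inner ℝ μ (h ω)) P :=
      hh2.sub (hinner.const_mul 2)
    have hint2 : Integrable (fun ω => (2:ℝ) * inner ℝ μ (h ω)) P := hinner.const_mul 2
    rw [integral_congr_ae (Filter.Eventually.of_forall hptw),
      integral_add hint1 (integrable_const _),
      integral_sub hh2 hint2, integral_const_mul, integral_inner hhint, hμ,
      real_inner_self_eq_norm_sq, integral_const]
    simp
    ring
  have hIY0 : ∫ ω, ‖Y ω‖ ^ 2 ∂P ≤ ∫ ω, ‖h ω‖ ^ 2 ∂P := by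
    rw [hYh]
    linarith [sq_nonneg ‖μ‖]
  -- apply the averaged smoothness assumption
  have hxx : x - xp = η • v := by rw [hxp]; abel
  have hnorm : ‖x - xp‖ = η * ‖v‖ := by
    rw [hxx, norm_smul, Real.norm_eq_abs, abs_of_pos hη]
  have hcond : L1 * ‖x - xp‖ ≤ 1 := by
    rw [hnorm]
    have h1 : L1 * (η * ‖v‖) * L0 ≤ L1 * ε := by
      have hmm := mul_le_mul_of_nonneg_left hη1 hL1.le
      calc L1 * (η * ‖v‖) * L0 = L1 * (L0 * η * ‖v‖) := by ring
        _ ≤ L1 * ε := hmm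
    have h3 : L1 * (η * ‖v‖) ≤ 1/2 :=
      le_of_mul_le_mul_right (by linarith : L1 * (η * ‖v‖) * L0 ≤ (1/2) * L0) hL0
    linarith
  have havg' := havg x xp hcond
  rw [hnorm] at havg'
  have hI0 : 0 ≤ ∫ ω, ‖g x ω - g xp ω‖ ^ 2 ∂P :=
    integral_nonneg fun ω => sq_nonneg _
  have hBnn : 0 ≤ (L0 + L1 * ‖gradient F x‖) * (η * ‖v‖) := by positivity
  have hB : ∫ ω, ‖g x ω - g xp ω‖ ^ 2 ∂P
      ≤ ((L0 + L1 * ‖gradient F x‖) * (η * ‖v‖)) ^ 2 := by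
    calc ∫ ω, ‖g x ω - g xp ω‖ ^ 2 ∂P
        = Real.sqrt (∫ ω, ‖g x ω - g xp ω‖ ^ 2 ∂P) ^ 2 := (Real.sq_sqrt hI0).symm
      _ ≤ ((L0 + L1 * ‖gradient F x‖) * (η * ‖v‖)) ^ 2 :=
          pow_le_pow_left₀ (Real.sqrt_nonneg _) havg' 2
  have hflip : ∫ ω, ‖h ω‖ ^ 2 ∂P = ∫ ω, ‖g x ω - g xp ω‖ ^ 2 ∂P := by
    refine integral_congr_ae (Filter.Eventually.of_forall fun ω => ?_)
    show ‖g xp ω - g x ω‖ ^ 2 = ‖g x ω - g xp ω‖ ^ 2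
    rw [norm_sub_rev]
  -- arithmetic
  set G := ‖gradient F x‖ with hGdef
  set D := ‖v - gradient F x‖ with hDdef
  have hD : (0:ℝ) ≤ D := norm_nonneg _
  have hG : G ≤ ‖v‖ + D := by
    have heq : gradient F x = v - (v - gradient F x) := by abel
    calc G = ‖v - (v - gradient F x)‖ := by rw [hGdef, ← heq]
      _ ≤ ‖v‖ + ‖v - gradient F x‖ := norm_sub_le _ _
  have t3 : L1 * (η * ‖v‖) ≤ L1 / L0 * ε := by
    rw [div_mul_eq_mul_div, le_div_iff₀ hL0]
    calc L1 * (η * ‖v‖) * L0 = L1 * (L0 * η * ‖v‖) := by ring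
      _ ≤ L1 * ε := mul_le_mul_of_nonneg_left hη1 hL1.le
  have hB2 : (L0 + L1 * G) * (η * ‖v‖) ≤ 2 * ε + (L1 / L0) * ε * D := by
    have hq : (0:ℝ) ≤ L1 * (η * ‖v‖) := by positivity
    calc (L0 + L1 * G) * (η * ‖v‖) = L0 * η * ‖v‖ + L1 * (η * ‖v‖) * G := by ring
      _ ≤ ε + L1 * (η * ‖v‖) * (‖v‖ + D) := by
          linarith [mul_le_mul_of_nonneg_left hG hq, hη1]
      _ = ε + L1 * η * ‖v‖ ^ 2 + L1 * (η * ‖v‖) * D := by ring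
      _ ≤ ε + ε + (L1 / L0) * ε * D := by
          linarith [mul_le_mul_of_nonneg_right t3 hD, hη2]
      _ = 2 * ε + (L1 / L0) * ε * D := by ring
  have hIY : ∫ ω, ‖Y ω‖ ^ 2 ∂P ≤ (2 * ε + (L1 / L0) * ε * D) ^ 2 := by
    calc ∫ ω, ‖Y ω‖ ^ 2 ∂P ≤ ∫ ω, ‖h ω‖ ^ 2 ∂P := hIY0
      _ = ∫ ω, ‖g x ω - g xp ω‖ ^ 2 ∂P := hflip
      _ ≤ ((L0 + L1 * G) * (η * ‖v‖)) ^ 2 := hB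
      _ ≤ (2 * ε + (L1 / L0) * ε * D) ^ 2 := by
          exact pow_le_pow_left₀ hBnn hB2 2
  have hfin : (2 * ε + (L1 / L0) * ε * D) ^ 2
      ≤ 6 * ε ^ 2 + 4 * (L1 / L0) ^ 2 * ε ^ 2 * D ^ 2 :=
    my_arith ε (L1 / L0) D (by positivity) hD
  calc ∫ ω : Fin m → Ω,
        ‖(m : ℝ)⁻¹ • (∑ i, (g xp (ω i) - g x (ω i))) + gradient F x - gradient F xp‖ ^ 2
        ∂(Measure.pi fun _ => P)
      = (m:ℝ)⁻¹ ^ 2 * ((m:ℝ) * ∫ ω, ‖Y ω‖ ^ 2 ∂P) := hLHS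
    _ = (∫ ω, ‖Y ω‖ ^ 2 ∂P) / m := by field_simp
    _ ≤ (6 * ε ^ 2 + 4 * (L1 / L0) ^ 2 * ε ^ 2 * D ^ 2) / m := by
        gcongr
        exact le_trans hIY hfin
    _ = (6 / m) * ε ^ 2 + (4 / m) * (L1 / L0) ^ 2 * ε ^ 2 * D ^ 2 := by ring
end
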